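/- Let p be an odd prime, L = F_{p^m}, σ = p^s with 0 < s < m, d = gcd(s,m) with m/d odd, and let 0 ≠ n ∈ L be such that t^{σ+1} + (n^σ − n)t + n − n² ≠ 0 for all t ∈ L. Then B(p,m,s,1,n,n^{σ−1}) is a presemifield and is isotopic to a commutative presemifield. Moreover, the displayed polynomial condition is satisfied whenever n lies in K₁* (K₁ = F_{p^d} the fixed field of x ↦ x^σ in L) and 1 − 1/n is a non-square in K₁. -/

import Mathlib

/-!
Write `σ = p ^ s` and `k = m / gcd(s, m)`. If `x ^ σ = -x`, then `x ^ (σ ^ k) = (-1) ^ k x = -x`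
since `k` is odd, while `x ^ (σ ^ k) = x` since `σ ^ k` is a power of `|L| = p ^ m`; so `x = 0`.
With `ad + bc = 0`, a zero of the first coordinate of the product factors as
`(n^σ b^σ (a - b) - a^σ (a - n b)) (b d^σ + b^σ d) = 0`: the second factor is excluded by the
previous remark, the first by the polynomial condition, which after the Möbius substitution
`t = n (n - 1 - u) / (u - n)` says that `u^(σ+1) ≠ n^σ (n - 1)`. The product becomes
commutative after the shear `(c, d) ↦ (c - 2 n d, d)` of its second argument. For the last
claim, `u = t^((σ+1)/2)` satisfies `u² = n² - n`, so `u^σ = ±u`, hence `u^σ = u`, and `u / n`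
is a square root of `1 - 1/n` fixed by `x ↦ x ^ σ`.
-/

/-- The first coordinate of the product `X(p,m,s,v,l,n,N)`; `B(p,m,s,l,n,N)` is the
case `v = 1`. -/
def Xh {L : Type*} [Field L] (σ : ℕ) (l n N v a b c d : L) : L :=
  (a * c ^ σ - n * N * b * d ^ σ) + l * (a ^ σ * c - n * N * b ^ σ * d)
    + n * v * ((N * a * d ^ σ - b * c ^ σ) + l * (a ^ σ * d - N * b ^ σ * c))

/-- The product `X(p,m,s,v,l,n,N)` on `L × L`. -/
def Xmul {L : Type*} [Field L] (σ : ℕ) (l n N v : L) (x y : L × L) : L × L :=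
  (Xh σ l n N v x.1 x.2 y.1 y.2, x.1 * y.2 + x.2 * y.1)

/-- `star` is isotopic to a commutative presemifield. -/
def IsotopicToCommutative {α : Type*} [AddCommGroup α] (star : α → α → α) : Prop :=
  ∃ (cdot : α → α → α) (A B C : α ≃+ α),
    (∀ x y z : α, cdot (x + y) z = cdot x z + cdot y z) ∧
    (∀ x y z : α, cdot x (y + z) = cdot x y + cdot x z) ∧
    (∀ x y : α, cdot x y = 0 → x = 0 ∨ y = 0) ∧
    (∀ x y : α, cdot x y = cdot y x) ∧
    (∀ x y : α, star (A x) (B y) = C (cdot x y))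

theorem pow_pow_eq_neg_one_pow_mul {R : Type*} [CommRing R] {q : ℕ} (hq : Odd q) {e : R}
    (he : e ^ q = -e) (j : ℕ) : e ^ q ^ j = (-1) ^ j * e := by
  induction j with
  | zero => simp
  | succ j ih =>
    rw [pow_succ, pow_mul, ih, mul_pow, ← pow_mul, mul_comm j, pow_mul, hq.neg_one_pow, he]
    ring

theorem FiniteField.eq_zero_of_pow_eq_neg {K : Type*} [Field K] [Fintype K] {p m s : ℕ}
    (hp : Odd p) (hcard : Fintype.card K = p ^ m) (hmd : Odd (m / Nat.gcd s m)) {e : K}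
    (he : e ^ p ^ s = -e) : e = 0 := by
  have h2 : (2 : K) ≠ 0 := Ring.two_ne_zero fun h => by
    have heven := FiniteField.even_card_iff_char_two.mp h
    rw [hcard, Nat.odd_iff.mp hp.pow] at heven
    exact one_ne_zero heven
  have hexp : (p ^ s) ^ (m / Nat.gcd s m) = Fintype.card K ^ (s / Nat.gcd s m) := by
    rw [hcard, ← pow_mul, ← pow_mul, ← Nat.mul_div_assoc s (Nat.gcd_dvd_right s m),
      ← Nat.mul_div_assoc m (Nat.gcd_dvd_left s m), mul_comm]
  have h := pow_pow_eq_neg_one_pow_mul (hp.pow (n := s)) he (m / Nat.gcd s m)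
  rw [hexp, FiniteField.pow_card_pow, hmd.neg_one_pow] at h
  exact (mul_eq_zero.mp (show (2 : K) * e = 0 by linear_combination h)).resolve_left h2

section Field

variable {K : Type*} [Field K]

theorem Xh_one_pow_sub_one {σ : ℕ} (hσ : σ ≠ 0) (n a b c d : K) :
    Xh σ 1 n (n ^ (σ - 1)) 1 a b c d =
      a * c ^ σ + a ^ σ * c + n * (a ^ σ * d - b * c ^ σ)
        + n ^ σ * (a * d ^ σ - b * d ^ σ - b ^ σ * d - b ^ σ * c) := by
  unfold Xh
  linear_combination (a * d ^ σ - b * d ^ σ - b ^ σ * d - b ^ σ * c) * mul_pow_sub_one hσ n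

theorem eq_zero_of_mul_pow_add_pow_mul_eq_zero {σ : ℕ} (h0 : ∀ e : K, e ^ σ = -e → e = 0)
    {a c : K} (ha : a ≠ 0) (h : a * c ^ σ + a ^ σ * c = 0) : c = 0 := by
  have hca : (c / a) ^ σ = -(c / a) := by
    rw [div_pow]
    field_simp
    linear_combination h
  simpa [ha] using h0 _ hca

theorem pow_eq_self_of_sq_pow_eq_sq {σ : ℕ} (h0 : ∀ e : K, e ^ σ = -e → e = 0)
    {u : K} (hu : (u ^ σ) ^ 2 = u ^ 2) : u ^ σ = u := by
  rcases sq_eq_sq_iff_eq_or_eq_neg.mp hu with h | h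
  · exact h
  · rw [h, h0 u h, neg_zero]

end Field

theorem IsotopicToCommutative.of_comm_twist {α : Type*} [AddCommGroup α] {star : α → α → α}
    (B : α ≃+ α) (add_left : ∀ x y z, star (x + y) z = star x z + star y z)
    (add_right : ∀ x y z, star x (y + z) = star x y + star x z)
    (eq_zero : ∀ x y, star x y = 0 → x = 0 ∨ y = 0)
    (comm : ∀ x y, star x (B y) = star y (B x)) :
    IsotopicToCommutative star := by
  refine ⟨fun x y => star x (B y), .refl α, B, .refl α, fun x y z => add_left x y (B z),
    fun x y z => by simp only [map_add, add_right], fun x y h => ?_, comm, fun _ _ => rfl⟩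
  exact (eq_zero x (B y) h).imp id fun hy => B.injective (hy.trans (map_zero B).symm)

def shearEquiv {L : Type*} [Field L] (n : L) : (L × L) ≃+ (L × L) where
  toFun y := (y.1 - 2 * n * y.2, y.2)
  invFun y := (y.1 + 2 * n * y.2, y.2)
  left_inv y := Prod.ext (sub_add_cancel _ _) rfl
  right_inv y := Prod.ext (add_sub_cancel_right _ _) rfl
  map_add' x y := Prod.ext (by simp only [Prod.fst_add, Prod.snd_add]; ring) rfl

section ExpChar

variable {K : Type*} [Field K] (p : ℕ) [ExpChar K p] (s : ℕ)

theorem Xmul_add_left (l n N v : K) (x y z : K × K) :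
    Xmul (p ^ s) l n N v (x + y) z = Xmul (p ^ s) l n N v x z + Xmul (p ^ s) l n N v y z := by
  simp only [Xmul, Xh, Prod.fst_add, Prod.snd_add, Prod.mk_add_mk, add_pow_expChar_pow]
  congr 1 <;> ring

theorem Xmul_add_right (l n N v : K) (x y z : K × K) :
    Xmul (p ^ s) l n N v x (y + z) = Xmul (p ^ s) l n N v x y + Xmul (p ^ s) l n N v x z := by
  simp only [Xmul, Xh, Prod.fst_add, Prod.snd_add, Prod.mk_add_mk, add_pow_expChar_pow]
  congr 1 <;> ring

theorem Xmul_shearEquiv_comm (n : K) (x y : K × K) :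
    Xmul (p ^ s) 1 n (n ^ (p ^ s - 1)) 1 x (shearEquiv n y) =
      Xmul (p ^ s) 1 n (n ^ (p ^ s - 1)) 1 y (shearEquiv n x) := by
  have hσ : p ^ s ≠ 0 := (expChar_pow_pos K p s).ne'
  have h2 : (2 : K) ^ p ^ s = 2 := by
    simpa [one_add_one_eq_two] using add_pow_expChar_pow (1 : K) 1 p s
  simp only [Xmul, shearEquiv, AddEquiv.coe_mk, Equiv.coe_fn_mk, Xh_one_pow_sub_one hσ,
    sub_pow_expChar_pow, mul_pow, h2]
  congr 1 <;> ring

theorem pow_mul_self_ne_of_poly_ne_zero {n : K} (hn : n ≠ 0)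
    (hf : ∀ t : K, t ^ (p ^ s + 1) + (n ^ (p ^ s) - n) * t + n - n ^ 2 ≠ 0) (u : K) :
    u ^ p ^ s * u ≠ n ^ p ^ s * (n - 1) := by
  have hσ : p ^ s ≠ 0 := (expChar_pow_pos K p s).ne'
  intro hu
  have hun : u - n ≠ 0 := by
    rintro hun
    rw [sub_eq_zero.mp hun] at hu
    exact hn (pow_eq_zero_iff hσ |>.mp (by linear_combination hu))
  have hunσ : u ^ p ^ s - n ^ p ^ s ≠ 0 := by
    rw [← sub_pow_expChar_pow]
    exact pow_ne_zero _ hun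
  apply hf (n * (n - 1 - u) / (u - n))
  rw [pow_succ, div_pow, mul_pow, sub_pow_expChar_pow, sub_pow_expChar_pow,
    sub_pow_expChar_pow, one_pow]
  field_simp
  linear_combination n * hu

theorem eq_zero_or_eq_zero_of_Xmul_eq_zero {n : K} (h0 : ∀ e : K, e ^ p ^ s = -e → e = 0)
    (h1 : ∀ u : K, u ^ p ^ s * u ≠ n ^ p ^ s * (n - 1)) (x y : K × K)
    (hxy : Xmul (p ^ s) 1 n (n ^ (p ^ s - 1)) 1 x y = 0) : x = 0 ∨ y = 0 := by
  have hσ : p ^ s ≠ 0 := (expChar_pow_pos K p s).ne'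
  obtain ⟨a, b⟩ := x
  obtain ⟨c, d⟩ := y
  simp only [Xmul, Prod.mk_eq_zero, Xh_one_pow_sub_one hσ] at hxy ⊢
  obtain ⟨hfst, hsnd⟩ := hxy
  rcases eq_or_ne b 0 with rfl | hb
  · rcases eq_or_ne a 0 with rfl | ha
    · exact .inl ⟨rfl, rfl⟩
    have hd : d = 0 := (mul_eq_zero.mp (by simpa using hsnd)).resolve_left ha
    subst hd
    refine .inr ⟨eq_zero_of_mul_pow_add_pow_mul_eq_zero h0 ha ?_, rfl⟩
    simpa [zero_pow hσ] using hfst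
  have hsndσ : a ^ p ^ s * d ^ p ^ s + b ^ p ^ s * c ^ p ^ s = 0 := by
    simpa [add_pow_expChar_pow, mul_pow, zero_pow hσ] using congrArg (· ^ p ^ s) hsnd
  have hfactor : (n ^ p ^ s * b ^ p ^ s * (a - b) - a ^ p ^ s * (a - n * b)) *
      (b * d ^ p ^ s + b ^ p ^ s * d) = 0 := by
    linear_combination (b ^ p ^ s * b) * hfst +
      (n ^ p ^ s * (b ^ p ^ s) ^ 2 - a ^ p ^ s * b ^ p ^ s) * hsnd + (n * b ^ 2 - a * b) * hsndσ
  rcases mul_eq_zero.mp hfactor with h | h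
  · refine (h1 ((a - n * b) / b) ?_).elim
    rw [div_pow, sub_pow_expChar_pow, mul_pow]
    field_simp
    linear_combination -h
  · have hd : d = 0 := eq_zero_of_mul_pow_add_pow_mul_eq_zero h0 hb h
    subst hd
    exact .inr ⟨(mul_eq_zero.mp (by simpa using hsnd)).resolve_left hb, rfl⟩

theorem poly_ne_zero_of_not_exists_fixed_sq_eq {n : K} (hp : Odd p) (hn : n ≠ 0)
    (h0 : ∀ e : K, e ^ p ^ s = -e → e = 0) (hfix : n ^ p ^ s = n)
    (hns : ¬ ∃ t : K, t ^ p ^ s = t ∧ t ^ 2 = 1 - 1 / n) (t : K) :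
    t ^ (p ^ s + 1) + (n ^ (p ^ s) - n) * t + n - n ^ 2 ≠ 0 := by
  intro ht
  rw [hfix, sub_self, zero_mul, add_zero] at ht
  obtain ⟨k, hk⟩ := (hp.pow (n := s)).add_one
  have hu : (t ^ k) ^ 2 = n ^ 2 - n := by
    rw [← pow_mul, mul_two, ← hk]
    linear_combination ht
  have huσ : (t ^ k) ^ p ^ s = t ^ k := by
    refine pow_eq_self_of_sq_pow_eq_sq h0 ?_
    rw [← pow_mul, mul_comm, pow_mul, hu, sub_pow_expChar_pow, ← pow_mul, mul_comm, pow_mul,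
      hfix]
  refine hns ⟨t ^ k / n, by rw [div_pow, huσ, hfix], ?_⟩
  rw [div_pow, hu]
  field_simp

end ExpChar

theorem B_family_commutative_parametric_general
    (p m s : ℕ) (hp : p.Prime) (hodd : Odd p)
    (L : Type*) [Field L] [Fintype L] (hcard : Fintype.card L = p ^ m)
    (hmd : Odd (m / Nat.gcd s m))
    (n : L) (hn : n ≠ 0) :
    ((∀ t : L, t ^ (p ^ s + 1) + (n ^ (p ^ s) - n) * t + n - n ^ 2 ≠ 0) →
      (∀ x y : L × L, Xmul (p ^ s) 1 n (n ^ (p ^ s - 1)) 1 x y = 0 → x = 0 ∨ y = 0) ∧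
      IsotopicToCommutative (Xmul (p ^ s) 1 n (n ^ (p ^ s - 1)) 1)) ∧
    ((n ^ (p ^ s) = n ∧ ¬ ∃ t : L, t ^ (p ^ s) = t ∧ t ^ 2 = 1 - 1 / n) →
      ∀ t : L, t ^ (p ^ s + 1) + (n ^ (p ^ s) - n) * t + n - n ^ 2 ≠ 0) := by
  have : Fact p.Prime := ⟨hp⟩
  have : CharP L p := charP_of_card_eq_prime_pow hcard
  have h0 : ∀ e : L, e ^ p ^ s = -e → e = 0 := fun e =>
    FiniteField.eq_zero_of_pow_eq_neg hodd hcard hmd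
  refine ⟨fun hf => ?_, fun ⟨hfix, hns⟩ =>
    poly_ne_zero_of_not_exists_fixed_sq_eq p s hodd hn h0 hfix hns⟩
  have hzero :=
    eq_zero_or_eq_zero_of_Xmul_eq_zero p s h0 (pow_mul_self_ne_of_poly_ne_zero p s hn hf)
  exact ⟨hzero, .of_comm_twist (shearEquiv n) (Xmul_add_left p s _ _ _ _)
    (Xmul_add_right p s _ _ _ _) hzero (Xmul_shearEquiv_comm p s n)⟩

/-- Theorem 7.15. -/
theorem B_family_commutative_parametric
    (p m s : ℕ) (hp : p.Prime) (hodd : Odd p) (hs : 0 < s) (hsm : s < m)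
    (L : Type*) [Field L] [Fintype L] (hcard : Fintype.card L = p ^ m)
    (hmd : Odd (m / Nat.gcd s m))
    (n : L) (hn : n ≠ 0) :
    ((∀ t : L, t ^ (p ^ s + 1) + (n ^ (p ^ s) - n) * t + n - n ^ 2 ≠ 0) →
      (∀ x y : L × L, Xmul (p ^ s) 1 n (n ^ (p ^ s - 1)) 1 x y = 0 → x = 0 ∨ y = 0) ∧
      IsotopicToCommutative (Xmul (p ^ s) 1 n (n ^ (p ^ s - 1)) 1)) ∧
    ((n ^ (p ^ s) = n ∧ ¬ ∃ t : L, t ^ (p ^ s) = t ∧ t ^ 2 = 1 - 1 / n) →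
      ∀ t : L, t ^ (p ^ s + 1) + (n ^ (p ^ s) - n) * t + n - n ^ 2 ≠ 0) :=
  B_family_commutative_parametric_general p m s hp hodd L hcard hmd n hn
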